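/- arXiv:2501.15887 — 4 statements merged into one kernel-verified Lean document; each statement's English description precedes it below -/
import Mathlib

section
/- Under the stated assumptions, ℓ(u₂) − ℓ(u₁) = B₂(u₁ − u₂, u₁ − u₂) + B₁(u₁,u₁) − B₂(u₁,u₁). In particular, ℓ(u₂) − ℓ(u₁) ≥ B₁(u₁,u₁) − B₂(u₁,u₁). -/
/-! Expanding `B₂(u₁ − u₂, u₁ − u₂)` with symmetry and `B₂(u₂, ·) = ℓ` gives
`B₂(u₁,u₁) − 2ℓ(u₁) + ℓ(u₂)`; substituting `ℓ(u₁) = B₁(u₁,u₁)` yields the identity, and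
coercivity of `B₂` makes the square term nonnegative. -/

theorem ContinuousLinearMap.apply_sub_sub_of_symm_of_apply_eq
    {𝕜 E : Type*} [NontriviallyNormedField 𝕜] [SeminormedAddCommGroup E] [NormedSpace 𝕜 E]
    {B : E →L[𝕜] E →L[𝕜] 𝕜} {ℓ : E →L[𝕜] 𝕜} {u : E}
    (hsym : ∀ x y, B x y = B y x) (hu : ∀ w, B u w = ℓ w) (v : E) :
    B (v - u) (v - u) = B v v - 2 * ℓ v + ℓ u := by
  simp only [map_sub, sub_apply, hsym v u, hu]
  ring

theorem stmt_0_general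
    {H : Type*} [NormedAddCommGroup H] [InnerProductSpace ℝ H]
    (B₁ B₂ : H →L[ℝ] H →L[ℝ] ℝ)
    (hsym₂ : ∀ x y : H, B₂ x y = B₂ y x)
    (c₂ : ℝ) (hc₂ : 0 < c₂)
    (hcoer₂ : ∀ x : H, B₂ x x ≥ c₂ * ‖x‖ ^ 2)
    (ℓ : H →L[ℝ] ℝ) (u₁ u₂ : H)
    (h₁ : ∀ w : H, B₁ u₁ w = ℓ w)
    (h₂ : ∀ w : H, B₂ u₂ w = ℓ w) :
    ℓ u₂ - ℓ u₁ = B₂ (u₁ - u₂) (u₁ - u₂) + B₁ u₁ u₁ - B₂ u₁ u₁ ∧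
    ℓ u₂ - ℓ u₁ ≥ B₁ u₁ u₁ - B₂ u₁ u₁ := by
  have identity : ℓ u₂ - ℓ u₁ = B₂ (u₁ - u₂) (u₁ - u₂) + B₁ u₁ u₁ - B₂ u₁ u₁ := by
    rw [ContinuousLinearMap.apply_sub_sub_of_symm_of_apply_eq hsym₂ h₂, ← h₁ u₁]
    ring
  have square_nonneg : 0 ≤ B₂ (u₁ - u₂) (u₁ - u₂) :=
    (mul_nonneg hc₂.le (sq_nonneg _)).trans (hcoer₂ _)
  exact ⟨identity, by linarith⟩

/-- Under the stated assumptions (Lax–Milgram solutions `u₁, u₂` of two symmetric,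
bounded, coercive bilinear forms `B₁, B₂` with the same right-hand side `ℓ`),
`ℓ(u₂) − ℓ(u₁) = B₂(u₁ − u₂, u₁ − u₂) + B₁(u₁,u₁) − B₂(u₁,u₁)`, and in particular
`ℓ(u₂) − ℓ(u₁) ≥ B₁(u₁,u₁) − B₂(u₁,u₁)`. -/
theorem stmt_0
    {H : Type*} [NormedAddCommGroup H] [InnerProductSpace ℝ H] [CompleteSpace H]
    (B₁ B₂ : H →L[ℝ] H →L[ℝ] ℝ)
    (hsym₁ : ∀ x y : H, B₁ x y = B₁ y x)
    (hsym₂ : ∀ x y : H, B₂ x y = B₂ y x)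
    (c₁ c₂ : ℝ) (hc₁ : 0 < c₁) (hc₂ : 0 < c₂)
    (hcoer₁ : ∀ x : H, B₁ x x ≥ c₁ * ‖x‖ ^ 2)
    (hcoer₂ : ∀ x : H, B₂ x x ≥ c₂ * ‖x‖ ^ 2)
    (ℓ : H →L[ℝ] ℝ) (u₁ u₂ : H)
    (h₁ : ∀ w : H, B₁ u₁ w = ℓ w)
    (h₂ : ∀ w : H, B₂ u₂ w = ℓ w) :
    ℓ u₂ - ℓ u₁ = B₂ (u₁ - u₂) (u₁ - u₂) + B₁ u₁ u₁ - B₂ u₁ u₁ ∧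
    ℓ u₂ - ℓ u₁ ≥ B₁ u₁ u₁ - B₂ u₁ u₁ :=
  stmt_0_general B₁ B₂ hsym₂ c₂ hc₂ hcoer₂ ℓ u₁ u₂ h₁ h₂
end

section
/- If in addition B₁(v,v) ≤ B₂(v,v) for all v ∈ H, then ℓ(u₂) ≤ ℓ(u₁). (This is the abstract form of the Loewner monotonicity σ₁ ≤ σ₂ ⟹ Λ(σ₁) ⪰ Λ(σ₂) of the Neumann-to-Dirichlet map.) -/
/-!
Thomson's principle: for a symmetric positive semidefinite form `B` and the solution `u` of
`B u = ℓ`, the value `ℓ u` is the maximum of `2 ℓ v - B v v` over `v`, attained at `v = u`.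
Increasing the form decreases every competitor, hence the maximum.
-/

section ThomsonPrinciple

variable {E : Type*} [NormedAddCommGroup E] [NormedSpace ℝ E]

theorem two_mul_sub_le_of_forall_apply_eq {B : E →L[ℝ] E →L[ℝ] ℝ}
    (hsym : ∀ x y, B x y = B y x) (hpos : ∀ x, 0 ≤ B x x)
    {ℓ : E →L[ℝ] ℝ} {u : E} (hu : ∀ w, B u w = ℓ w) (v : E) :
    2 * ℓ v - B v v ≤ ℓ u := by
  have hexpand : B (u - v) (u - v) = ℓ u - 2 * ℓ v + B v v := by
    simp only [map_sub, sub_apply, hsym v u, hu]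
    ring
  linarith [hpos (u - v)]

end ThomsonPrinciple

theorem stmt_1_general
    {H : Type*} [NormedAddCommGroup H] [InnerProductSpace ℝ H]
    (B₁ B₂ : H →L[ℝ] H →L[ℝ] ℝ)
    (hsym₁ : ∀ x y : H, B₁ x y = B₁ y x)
    (c₁ : ℝ) (hc₁ : 0 < c₁)
    (hcoer₁ : ∀ x : H, B₁ x x ≥ c₁ * ‖x‖ ^ 2)
    (ℓ : H →L[ℝ] ℝ) (u₁ u₂ : H)
    (h₁ : ∀ w : H, B₁ u₁ w = ℓ w)
    (h₂ : ∀ w : H, B₂ u₂ w = ℓ w)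
    (hmono : ∀ v : H, B₁ v v ≤ B₂ v v) :
    ℓ u₂ ≤ ℓ u₁ := by
  have hpos₁ : ∀ x, 0 ≤ B₁ x x := fun x =>
    (mul_nonneg hc₁.le (sq_nonneg ‖x‖)).trans (hcoer₁ x)
  calc ℓ u₂ = 2 * ℓ u₂ - B₂ u₂ u₂ := by rw [h₂]; ring
    _ ≤ 2 * ℓ u₂ - B₁ u₂ u₂ := by linarith [hmono u₂]
    _ ≤ ℓ u₁ := two_mul_sub_le_of_forall_apply_eq hsym₁ hpos₁ h₁ u₂

/-- If in addition `B₁(v,v) ≤ B₂(v,v)` for all `v ∈ H`, then `ℓ(u₂) ≤ ℓ(u₁)`.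
(Abstract form of the Loewner monotonicity `σ₁ ≤ σ₂ ⟹ Λ(σ₁) ⪰ Λ(σ₂)` of the
Neumann-to-Dirichlet map.) -/
theorem stmt_1
    {H : Type*} [NormedAddCommGroup H] [InnerProductSpace ℝ H] [CompleteSpace H]
    (B₁ B₂ : H →L[ℝ] H →L[ℝ] ℝ)
    (hsym₁ : ∀ x y : H, B₁ x y = B₁ y x)
    (hsym₂ : ∀ x y : H, B₂ x y = B₂ y x)
    (c₁ c₂ : ℝ) (hc₁ : 0 < c₁) (hc₂ : 0 < c₂)
    (hcoer₁ : ∀ x : H, B₁ x x ≥ c₁ * ‖x‖ ^ 2)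
    (hcoer₂ : ∀ x : H, B₂ x x ≥ c₂ * ‖x‖ ^ 2)
    (ℓ : H →L[ℝ] ℝ) (u₁ u₂ : H)
    (h₁ : ∀ w : H, B₁ u₁ w = ℓ w)
    (h₂ : ∀ w : H, B₂ u₂ w = ℓ w)
    (hmono : ∀ v : H, B₁ v v ≤ B₂ v v) :
    ℓ u₂ ≤ ℓ u₁ :=
  stmt_1_general B₁ B₂ hsym₁ c₁ hc₁ hcoer₁ ℓ u₁ u₂ h₁ h₂ hmono
end

section
/- If in addition τ(x) ≤ σ(x) for μ-a.e. x, then ∫ τ‖G‖² dμ ≥ ∫ σ‖F‖² dμ. (This is the monotonicity τ ≤ σ ⟹ Λ(τ) ⪰ Λ(σ) of the Neumann-to-Dirichlet map, expressed through its quadratic forms.) -/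
/-! Pointwise, `τ‖G‖² - 2τ⟪G, F⟫ + σ‖F‖² = τ‖G - F‖² + (σ - τ)‖F‖² ≥ 0` when `0 ≤ τ ≤ σ`.
Integrating and replacing `∫ τ⟪G, F⟫` by `∫ σ‖F‖²` (the second cross-identity) gives
`∫ τ‖G‖² - ∫ σ‖F‖² ≥ 0`. -/

open MeasureTheory
open scoped RealInnerProductSpace

section

variable {X : Type*} [MeasurableSpace X] {μ : Measure X}
  {H : Type*} [NormedAddCommGroup H] [InnerProductSpace ℝ H]

theorem two_mul_weighted_inner_le {f g : H} {s t : ℝ} (ht : 0 ≤ t) (hts : t ≤ s) :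
    2 * (t * ⟪g, f⟫) ≤ t * ‖g‖ ^ 2 + s * ‖f‖ ^ 2 := by
  have hsq : 0 ≤ t * ‖g - f‖ ^ 2 + (s - t) * ‖f‖ ^ 2 := by
    have := sub_nonneg.mpr hts
    positivity
  rw [norm_sub_sq_real] at hsq
  linarith

theorem MeasureTheory.Integrable.inner_of_integrable_norm_sq {F G : X → H}
    (hF : AEStronglyMeasurable F μ) (hG : AEStronglyMeasurable G μ)
    (hF2 : Integrable (fun x => ‖F x‖ ^ 2) μ) (hG2 : Integrable (fun x => ‖G x‖ ^ 2) μ) :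
    Integrable (fun x => ⟪F x, G x⟫) μ := by
  refine (hF2.add hG2).mono' (hF.inner hG) (Filter.Eventually.of_forall fun x => ?_)
  calc ‖⟪F x, G x⟫‖ ≤ ‖F x‖ * ‖G x‖ := norm_inner_le_norm _ _
    _ ≤ ‖F x‖ ^ 2 + ‖G x‖ ^ 2 := by nlinarith [sq_nonneg (‖F x‖ - ‖G x‖)]

theorem two_mul_integral_weighted_inner_le {F G : X → H} {σ τ : X → ℝ}
    (hτG : Integrable (fun x => τ x * ‖G x‖ ^ 2) μ)
    (hσF : Integrable (fun x => σ x * ‖F x‖ ^ 2) μ)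
    (hτGF : Integrable (fun x => τ x * ⟪G x, F x⟫) μ)
    (hτ : ∀ᵐ x ∂μ, 0 ≤ τ x) (hτσ : ∀ᵐ x ∂μ, τ x ≤ σ x) :
    2 * ∫ x, τ x * ⟪G x, F x⟫ ∂μ ≤ ∫ x, τ x * ‖G x‖ ^ 2 ∂μ + ∫ x, σ x * ‖F x‖ ^ 2 ∂μ := by
  rw [← integral_const_mul, ← integral_add hτG hσF]
  refine integral_mono_ae (hτGF.const_mul 2) (hτG.add hσF) ?_
  filter_upwards [hτ, hτσ] with x hx hxσ
  exact two_mul_weighted_inner_le hx hxσ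

theorem norm_le_of_ae_mem_Icc {σ : X → ℝ} {c C : ℝ} (hc : 0 < c)
    (hσb : ∀ᵐ x ∂μ, c ≤ σ x ∧ σ x ≤ C) : ∀ᵐ x ∂μ, ‖σ x‖ ≤ C := by
  filter_upwards [hσb] with x hx
  exact (Real.norm_eq_abs _).trans_le (abs_le.mpr ⟨by linarith [hx.1], hx.2⟩)

end

theorem stmt_7_general
    {X : Type*} [MeasurableSpace X] (μ : Measure X)
    {H : Type*} [NormedAddCommGroup H] [InnerProductSpace ℝ H]
    (F G : X → H)
    (hF : AEStronglyMeasurable F μ) (hG : AEStronglyMeasurable G μ)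
    (hF2 : Integrable (fun x => ‖F x‖ ^ 2) μ)
    (hG2 : Integrable (fun x => ‖G x‖ ^ 2) μ)
    (σ τ : X → ℝ) (hσm : Measurable σ) (hτm : Measurable τ)
    (c C : ℝ) (hc : 0 < c)
    (hσb : ∀ᵐ x ∂μ, c ≤ σ x ∧ σ x ≤ C)
    (hτb : ∀ᵐ x ∂μ, c ≤ τ x ∧ τ x ≤ C)
    (hcross₂ : ∫ x, σ x * ‖F x‖ ^ 2 ∂μ = ∫ x, τ x * ⟪G x, F x⟫ ∂μ)
    (hτσ : ∀ᵐ x ∂μ, τ x ≤ σ x) :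
    ∫ x, τ x * ‖G x‖ ^ 2 ∂μ ≥ ∫ x, σ x * ‖F x‖ ^ 2 ∂μ := by
  have hσC := norm_le_of_ae_mem_Icc hc hσb
  have hτC := norm_le_of_ae_mem_Icc hc hτb
  have hτ : ∀ᵐ x ∂μ, 0 ≤ τ x := by
    filter_upwards [hτb] with x hx
    linarith [hx.1]
  have key := two_mul_integral_weighted_inner_le
    (hG2.bdd_mul hτm.aestronglyMeasurable hτC) (hF2.bdd_mul hσm.aestronglyMeasurable hσC)
    ((Integrable.inner_of_integrable_norm_sq hG hF hG2 hF2).bdd_mul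
      hτm.aestronglyMeasurable hτC) hτ hτσ
  linarith

/-- If in addition `τ ≤ σ` a.e., then `∫ τ‖G‖² dμ ≥ ∫ σ‖F‖² dμ`
(the monotonicity `τ ≤ σ ⟹ Λ(τ) ⪰ Λ(σ)` of the Neumann-to-Dirichlet map,
expressed through its quadratic forms). -/
theorem stmt_7
    {X : Type*} [MeasurableSpace X] (μ : Measure X)
    {H : Type*} [NormedAddCommGroup H] [InnerProductSpace ℝ H]
    (F G : X → H)
    (hF : AEStronglyMeasurable F μ) (hG : AEStronglyMeasurable G μ)
    (hF2 : Integrable (fun x => ‖F x‖ ^ 2) μ)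
    (hG2 : Integrable (fun x => ‖G x‖ ^ 2) μ)
    (σ τ : X → ℝ) (hσm : Measurable σ) (hτm : Measurable τ)
    (c C : ℝ) (hc : 0 < c) (hcC : c ≤ C)
    (hσb : ∀ᵐ x ∂μ, c ≤ σ x ∧ σ x ≤ C)
    (hτb : ∀ᵐ x ∂μ, c ≤ τ x ∧ τ x ≤ C)
    (hcross₁ : ∫ x, σ x * ⟪F x, G x⟫ ∂μ = ∫ x, τ x * ‖G x‖ ^ 2 ∂μ)
    (hcross₂ : ∫ x, σ x * ‖F x‖ ^ 2 ∂μ = ∫ x, τ x * ⟪G x, F x⟫ ∂μ)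
    (hτσ : ∀ᵐ x ∂μ, τ x ≤ σ x) :
    ∫ x, τ x * ‖G x‖ ^ 2 ∂μ ≥ ∫ x, σ x * ‖F x‖ ^ 2 ∂μ :=
  stmt_7_general μ F G hF hG hF2 hG2 σ τ hσm hτm c C hc hσb hτb hcross₂ hτσ
end

section
/- Let D, B ⊆ X be measurable sets with μ(B \ D) = 0, let 0 < σ₀ < σ₁ and 0 < α ≤ σ₁ − σ₀ be real constants, and set σ := σ₀ + (σ₁−σ₀)·1_D and τ := σ₀ + α·1_B. Then under the variational cross-identities, ∫ τ‖G‖² dμ ≥ ∫ σ‖F‖² dμ. (This is the 'if' direction of the standard monotonicity test: B ⊆ D̄ implies Λ(σ₀+αχ_B) ⪰ Λ(σ).) -/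
/-!
Expanding `τ‖G - F‖² + (σ - τ)‖F‖² ≥ 0`, which holds a.e. because `0 ≤ τ ≤ σ` a.e. when
`B ⊆ D` up to a null set and `α ≤ σ₁ - σ₀`, gives `0 ≤ ∫ τ‖G‖² - 2 ∫ τ⟪G, F⟫ + ∫ σ‖F‖²`.
The second cross-identity turns the middle term into `-2 ∫ σ‖F‖²`.
-/

open MeasureTheory
open scoped RealInnerProductSpace

section

variable {X : Type*} [MeasurableSpace X] {μ : Measure X}
  {H : Type*} [NormedAddCommGroup H] [InnerProductSpace ℝ H]

theorem integrable_inner_of_integrable_norm_sq {F G : X → H}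
    (hF : AEStronglyMeasurable F μ) (hG : AEStronglyMeasurable G μ)
    (hF2 : Integrable (fun x => ‖F x‖ ^ 2) μ) (hG2 : Integrable (fun x => ‖G x‖ ^ 2) μ) :
    Integrable (fun x => ⟪G x, F x⟫) μ := by
  refine (hG2.add hF2).mono' (hG.inner hF) (Filter.Eventually.of_forall fun x => ?_)
  calc ‖⟪G x, F x⟫‖ ≤ ‖G x‖ * ‖F x‖ := norm_inner_le_norm _ _
    _ ≤ ‖G x‖ ^ 2 + ‖F x‖ ^ 2 := by nlinarith [norm_nonneg (G x), norm_nonneg (F x)]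

theorem MeasureTheory.Integrable.const_add_mul_indicator_one_mul {s : Set X}
    (hs : MeasurableSet s) (a b : ℝ) {g : X → ℝ} (hg : Integrable g μ) :
    Integrable (fun x => (a + b * s.indicator 1 x) * g x) μ := by
  refine hg.bdd_mul (c := |a| + |b|) ?_ (Filter.Eventually.of_forall fun x => ?_)
  · exact aestronglyMeasurable_const.add
      (aestronglyMeasurable_const.mul (stronglyMeasurable_const.indicator hs).aestronglyMeasurable)
  · have hind : ‖s.indicator (1 : X → ℝ) x‖ ≤ 1 := by
      simpa using norm_indicator_le_norm_self (1 : X → ℝ) x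
    calc ‖a + b * s.indicator 1 x‖ ≤ ‖a‖ + ‖b‖ * ‖s.indicator (1 : X → ℝ) x‖ := by
          rw [← norm_mul]; exact norm_add_le _ _
      _ ≤ ‖a‖ + ‖b‖ * 1 := by gcongr
      _ = |a| + |b| := by rw [mul_one, Real.norm_eq_abs, Real.norm_eq_abs]

theorem const_add_mul_indicator_one_ae_le {B D : Set X} (hBD : μ (B \ D) = 0) {α β : ℝ}
    (hα : 0 ≤ α) (hαβ : α ≤ β) (a : ℝ) :
    (fun x => a + α * B.indicator 1 x) ≤ᵐ[μ] fun x => a + β * D.indicator 1 x := by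
  filter_upwards [ae_le_set.mpr hBD] with x hB_D
  by_cases hxB : x ∈ B
  · simp [hxB, show x ∈ D from hB_D hxB, hαβ]
  · by_cases hxD : x ∈ D
    · simpa [hxB, hxD] using hα.trans hαβ
    · simp [hxB, hxD]

theorem integral_mul_norm_sq_le_of_integral_eq_inner {σ τ : X → ℝ} {F G : X → H}
    (hτ : 0 ≤ᵐ[μ] τ) (hτσ : τ ≤ᵐ[μ] σ)
    (hτG : Integrable (fun x => τ x * ‖G x‖ ^ 2) μ)
    (hτGF : Integrable (fun x => τ x * ⟪G x, F x⟫) μ)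
    (hσF : Integrable (fun x => σ x * ‖F x‖ ^ 2) μ)
    (hcross : ∫ x, σ x * ‖F x‖ ^ 2 ∂μ = ∫ x, τ x * ⟪G x, F x⟫ ∂μ) :
    ∫ x, σ x * ‖F x‖ ^ 2 ∂μ ≤ ∫ x, τ x * ‖G x‖ ^ 2 ∂μ := by
  have hpointwise : ∀ᵐ x ∂μ,
      0 ≤ τ x * ‖G x‖ ^ 2 - 2 * (τ x * ⟪G x, F x⟫) + σ x * ‖F x‖ ^ 2 := by
    filter_upwards [hτ, hτσ] with x hτx hτσx
    have hsplit : τ x * ‖G x‖ ^ 2 - 2 * (τ x * ⟪G x, F x⟫) + σ x * ‖F x‖ ^ 2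
        = τ x * ‖G x - F x‖ ^ 2 + (σ x - τ x) * ‖F x‖ ^ 2 := by
      rw [norm_sub_sq_real]; ring
    rw [hsplit]
    have hgap : 0 ≤ σ x - τ x := sub_nonneg.mpr hτσx
    have hτx' : 0 ≤ τ x := hτx
    positivity
  have hnonneg := integral_nonneg_of_ae hpointwise
  have hdiff : Integrable (fun x => τ x * ‖G x‖ ^ 2 - 2 * (τ x * ⟪G x, F x⟫)) μ :=
    hτG.sub (hτGF.const_mul 2)
  rw [integral_add hdiff hσF, integral_sub hτG (hτGF.const_mul 2), integral_const_mul] at hnonneg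
  linarith

end

theorem stmt_8_general
    {X : Type*} [MeasurableSpace X] (μ : Measure X)
    {H : Type*} [NormedAddCommGroup H] [InnerProductSpace ℝ H]
    (F G : X → H)
    (hF : AEStronglyMeasurable F μ) (hG : AEStronglyMeasurable G μ)
    (hF2 : Integrable (fun x => ‖F x‖ ^ 2) μ)
    (hG2 : Integrable (fun x => ‖G x‖ ^ 2) μ)
    (D B : Set X) (hD : MeasurableSet D) (hB : MeasurableSet B)
    (hBD : μ (B \ D) = 0)
    (σ₀ σ₁ α : ℝ) (hσ₀ : 0 < σ₀)
    (hα : 0 < α) (hα' : α ≤ σ₁ - σ₀)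
    (σ τ : X → ℝ)
    (hσdef : σ = fun x => σ₀ + (σ₁ - σ₀) * D.indicator (1 : X → ℝ) x)
    (hτdef : τ = fun x => σ₀ + α * B.indicator (1 : X → ℝ) x)
    (hcross₂ : ∫ x, σ x * ‖F x‖ ^ 2 ∂μ = ∫ x, τ x * ⟪G x, F x⟫ ∂μ) :
    ∫ x, τ x * ‖G x‖ ^ 2 ∂μ ≥ ∫ x, σ x * ‖F x‖ ^ 2 ∂μ := by
  subst hσdef hτdef
  have hτ_nonneg : 0 ≤ᵐ[μ] fun x => σ₀ + α * B.indicator (1 : X → ℝ) x :=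
    Filter.Eventually.of_forall fun x =>
      add_nonneg hσ₀.le (mul_nonneg hα.le (Set.indicator_nonneg (fun _ _ => zero_le_one) x))
  have hGF := integrable_inner_of_integrable_norm_sq hF hG hF2 hG2
  exact integral_mul_norm_sq_le_of_integral_eq_inner hτ_nonneg
    (const_add_mul_indicator_one_ae_le hBD hα.le hα' σ₀)
    (hG2.const_add_mul_indicator_one_mul hB σ₀ α)
    (hGF.const_add_mul_indicator_one_mul hB σ₀ α)
    (hF2.const_add_mul_indicator_one_mul hD σ₀ (σ₁ - σ₀)) hcross₂

/-- The 'if' direction of the standard monotonicity test: for measurable sets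
`D, B` with `μ(B \ D) = 0`, constants `0 < σ₀ < σ₁`, `0 < α ≤ σ₁ − σ₀`, and
`σ := σ₀ + (σ₁−σ₀)·1_D`, `τ := σ₀ + α·1_B`, the variational cross-identities imply
`∫ τ‖G‖² dμ ≥ ∫ σ‖F‖² dμ` (i.e. `B ⊆ D̄` implies `Λ(σ₀+αχ_B) ⪰ Λ(σ)`). -/
theorem stmt_8
    {X : Type*} [MeasurableSpace X] (μ : Measure X)
    {H : Type*} [NormedAddCommGroup H] [InnerProductSpace ℝ H]
    (F G : X → H)
    (hF : AEStronglyMeasurable F μ) (hG : AEStronglyMeasurable G μ)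
    (hF2 : Integrable (fun x => ‖F x‖ ^ 2) μ)
    (hG2 : Integrable (fun x => ‖G x‖ ^ 2) μ)
    (D B : Set X) (hD : MeasurableSet D) (hB : MeasurableSet B)
    (hBD : μ (B \ D) = 0)
    (σ₀ σ₁ α : ℝ) (hσ₀ : 0 < σ₀) (hσ₀₁ : σ₀ < σ₁)
    (hα : 0 < α) (hα' : α ≤ σ₁ - σ₀)
    (σ τ : X → ℝ)
    (hσdef : σ = fun x => σ₀ + (σ₁ - σ₀) * D.indicator (1 : X → ℝ) x)
    (hτdef : τ = fun x => σ₀ + α * B.indicator (1 : X → ℝ) x)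
    (hcross₁ : ∫ x, σ x * ⟪F x, G x⟫ ∂μ = ∫ x, τ x * ‖G x‖ ^ 2 ∂μ)
    (hcross₂ : ∫ x, σ x * ‖F x‖ ^ 2 ∂μ = ∫ x, τ x * ⟪G x, F x⟫ ∂μ) :
    ∫ x, τ x * ‖G x‖ ^ 2 ∂μ ≥ ∫ x, σ x * ‖F x‖ ^ 2 ∂μ :=
  stmt_8_general μ F G hF hG hF2 hG2 D B hD hB hBD σ₀ σ₁ α hσ₀ hα hα' σ τ hσdef hτdef hcross₂
end
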